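/- Let p, q ∈ ℝ³ with ‖p‖ = d > 0 and ‖q‖ = r, and suppose r ≤ d. Then the far-field approximation error satisfies |‖p − q‖ − (d − ⟨p,q⟩/d)| ≤ r²/d. (This bounds the error in the approximation ‖p − q‖ ≈ d − u^T q with u = p/d.) -/

import Mathlib

open scoped RealInnerProductSpace

/-!
The lower bound is Cauchy–Schwarz applied to `⟪p, p - q⟫ = ‖p‖² - ⟪p, q⟫`.
For the upper bound, `2 ‖p‖ ‖p - q‖ ≤ ‖p‖² + ‖p - q‖²`, and by the law of cosines the right-hand
side is `2 (‖p‖² - ⟪p, q⟫) + ‖q‖²`. Dividing by `‖p‖` gives the error bound `‖q‖² / (2 ‖p‖)`.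
-/

section

variable {E : Type*} [NormedAddCommGroup E] [InnerProductSpace ℝ E]

theorem norm_sq_sub_inner_le_norm_mul_norm_sub (p q : E) :
    ‖p‖ ^ 2 - ⟪p, q⟫ ≤ ‖p‖ * ‖p - q‖ := by
  calc ‖p‖ ^ 2 - ⟪p, q⟫ = ⟪p, p - q⟫ := by rw [inner_sub_right, real_inner_self_eq_norm_sq]
    _ ≤ ‖p‖ * ‖p - q‖ := real_inner_le_norm p (p - q)

theorem norm_mul_norm_sub_le (p q : E) :
    ‖p‖ * ‖p - q‖ ≤ ‖p‖ ^ 2 - ⟪p, q⟫ + ‖q‖ ^ 2 / 2 := by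
  have h := two_mul_le_add_sq ‖p‖ ‖p - q‖
  rw [norm_sub_sq_real] at h
  linarith

theorem abs_norm_sub_sub_first_order_le {p : E} (hp : p ≠ 0) (q : E) :
    |‖p - q‖ - (‖p‖ - ⟪p, q⟫ / ‖p‖)| ≤ ‖q‖ ^ 2 / (2 * ‖p‖) := by
  have hp' : 0 < ‖p‖ := norm_pos_iff.mpr hp
  have lower := norm_sq_sub_inner_le_norm_mul_norm_sub p q
  have upper := norm_mul_norm_sub_le p q
  have error_eq : ‖p - q‖ - (‖p‖ - ⟪p, q⟫ / ‖p‖)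
      = (‖p‖ * ‖p - q‖ - (‖p‖ ^ 2 - ⟪p, q⟫)) / ‖p‖ := by
    field_simp
  rw [error_eq, abs_div, abs_of_pos hp', ← div_div]
  gcongr
  exact abs_le.mpr ⟨by linarith, by linarith⟩

end

theorem far_field_approximation_error_general
    (p q : EuclideanSpace ℝ (Fin 3)) (d r : ℝ)
    (hp : ‖p‖ = d) (hd : 0 < d) (hq : ‖q‖ = r) :
    |‖p - q‖ - (d - ⟪p, q⟫ / d)| ≤ r ^ 2 / d := by
  subst hp hq
  calc _ ≤ ‖q‖ ^ 2 / (2 * ‖p‖) := abs_norm_sub_sub_first_order_le (norm_pos_iff.mp hd) q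
    _ ≤ ‖q‖ ^ 2 / ‖p‖ := div_le_div_of_nonneg_left (by positivity) hd (by linarith)

theorem far_field_approximation_error
    (p q : EuclideanSpace ℝ (Fin 3)) (d r : ℝ)
    (hp : ‖p‖ = d) (hd : 0 < d) (hq : ‖q‖ = r) (hrd : r ≤ d) :
    |‖p - q‖ - (d - ⟪p, q⟫ / d)| ≤ r ^ 2 / d :=
  far_field_approximation_error_general p q d r hp hd hq
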